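/- Let G ⊆ K_{m,n} be a connected bipartite graph and let A, B ∈ I_G^(1) be first independent sets. If H_A ∩ σ_G^∨ = H_B ∩ σ_G^∨, where H_A denotes the supporting hyperplane H_{A₁} of a nonempty one-sided part A₁ of A (and likewise for B), then A = B. In other words, the map sending a first independent set A to the facet H_A ∩ σ_G^∨ of σ_G^∨ is injective. -/

import Mathlib

/-!
Common setup: a bipartite graph `G ⊆ K_{m,n}` is encoded by an edge relation
`E : Fin m → Fin n → Prop` (vertex set `V = Fin m ⊕ Fin n`, with `U₁` the left
summand and `U₂` the right summand).
-/

namespace ToricBipartite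

open Sum Finset

variable {m n : ℕ}

/-- The simple graph on `Fin m ⊕ Fin n` determined by the bipartite edge relation `E`. -/
def toGraph (E : Fin m → Fin n → Prop) : SimpleGraph (Fin m ⊕ Fin n) where
  Adj u v :=
    (∃ i j, u = inl i ∧ v = inr j ∧ E i j) ∨ (∃ i j, u = inr j ∧ v = inl i ∧ E i j)
  symm := by
    constructor; rintro u v (⟨i, j, hu, hv, h⟩ | ⟨i, j, hu, hv, h⟩)
    · exact Or.inr ⟨i, j, hv, hu, h⟩
    · exact Or.inl ⟨i, j, hv, hu, h⟩
  loopless := by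
    constructor; rintro u (⟨i, j, hu, hv, h⟩ | ⟨i, j, hu, hv, h⟩) <;> rw [hu] at hv <;> simp at hv

/-- The generator `e^i + f^j` of the dual edge cone. -/
def gen (i : Fin m) (j : Fin n) : (Fin m ⊕ Fin n) → ℝ :=
  Pi.single (inl i) 1 + Pi.single (inr j) 1

/-- The set of generators `{e^i + f^j : (i, m+j) ∈ E(G)}` of the dual edge cone. -/
def genSet (E : Fin m → Fin n → Prop) : Set ((Fin m ⊕ Fin n) → ℝ) :=
  {x | ∃ i j, E i j ∧ x = gen i j}

/-- The dual edge cone `σ_G^∨ ⊆ ℝ^{m+n}`: all nonnegative combinations of the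
generators `e^i + f^j` over the edges of `G`. -/
def dualEdgeCone (E : Fin m → Fin n → Prop) : Set ((Fin m ⊕ Fin n) → ℝ) :=
  {x | ∃ c : Fin m → Fin n → ℝ, (∀ i j, 0 ≤ c i j) ∧ (∀ i j, c i j ≠ 0 → E i j) ∧
      x = ∑ i, ∑ j, c i j • gen i j}

/-- The neighbour set `N(A) ⊆ U₂` of a set `A ⊆ U₁`. -/
def nbrR (E : Fin m → Fin n → Prop) [∀ i j, Decidable (E i j)]
    (A : Finset (Fin m)) : Finset (Fin n) :=
  univ.filter fun j => ∃ i ∈ A, E i j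

/-- The neighbour set `N(B) ⊆ U₁` of a set `B ⊆ U₂`. -/
def nbrL (E : Fin m → Fin n → Prop) [∀ i j, Decidable (E i j)]
    (B : Finset (Fin n)) : Finset (Fin m) :=
  univ.filter fun i => ∃ j ∈ B, E i j

/-- `A₁ ⊔ A₂ ⊆ U₁ ⊔ U₂` contains no pair of adjacent vertices (since the graph is
bipartite this says there is no edge between `A₁` and `A₂`). -/
def IsIndepPair (E : Fin m → Fin n → Prop)
    (A₁ : Finset (Fin m)) (A₂ : Finset (Fin n)) : Prop :=
  ∀ i ∈ A₁, ∀ j ∈ A₂, ¬ E i j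

/-- A two-sided independent set `B₁ ⊔ B₂`, with `∅ ≠ B₁ ⊊ U₁` and `∅ ≠ B₂ ⊊ U₂`. -/
def TwoSidedIndep (E : Fin m → Fin n → Prop)
    (B₁ : Finset (Fin m)) (B₂ : Finset (Fin n)) : Prop :=
  B₁.Nonempty ∧ B₁ ≠ univ ∧ B₂.Nonempty ∧ B₂ ≠ univ ∧ IsIndepPair E B₁ B₂

/-- A two-sided *maximal* independent set: two-sided independent, and contained in no
strictly larger independent set of the graph. -/
def TwoSidedMaxIndep (E : Fin m → Fin n → Prop)
    (A₁ : Finset (Fin m)) (A₂ : Finset (Fin n)) : Prop :=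
  TwoSidedIndep E A₁ A₂ ∧
    ∀ B₁ B₂, IsIndepPair E B₁ B₂ → A₁ ⊆ B₁ → A₂ ⊆ B₂ → B₁ = A₁ ∧ B₂ = A₂

/-- Membership in `I_G^(*)`: either a two-sided maximal independent set, or a one-sided
independent set of the form `U_i ∖ {v}` not contained in any two-sided independent set.
A set is encoded as the pair of its parts `(A₁, A₂) = (A ∩ U₁, A ∩ U₂)`. -/
def InIStar (E : Fin m → Fin n → Prop)
    (A₁ : Finset (Fin m)) (A₂ : Finset (Fin n)) : Prop :=
  TwoSidedMaxIndep E A₁ A₂ ∨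
    (A₂ = ∅ ∧ A₁.Nonempty ∧ (∃ v, A₁ = {v}ᶜ) ∧
      ¬ ∃ B₁ B₂, TwoSidedIndep E B₁ B₂ ∧ A₁ ⊆ B₁) ∨
    (A₁ = ∅ ∧ A₂.Nonempty ∧ (∃ v, A₂ = {v}ᶜ) ∧
      ¬ ∃ B₁ B₂, TwoSidedIndep E B₁ B₂ ∧ A₂ ⊆ B₂)

/-- The edge relation of the associated (spanning) subgraph `G{A}` of `A ∈ I_G^(*)`:
for one-sided `A = A₁ ⊆ U₁` the edges of `G[A₁ ⊔ N(A₁)] ⊔ G[(U₁∖A₁) ⊔ (U₂∖N(A₁))]`,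
symmetrically for one-sided `A = A₂ ⊆ U₂`, and for two-sided `A = A₁ ⊔ A₂` the edges of
`G[A₁ ⊔ N(A₁)] ⊔ G[A₂ ⊔ N(A₂)]`. -/
def assoc (E : Fin m → Fin n → Prop) [∀ i j, Decidable (E i j)]
    (A₁ : Finset (Fin m)) (A₂ : Finset (Fin n)) : Fin m → Fin n → Prop := fun i j =>
  E i j ∧
    (if A₂ = ∅ then i ∈ A₁ ∨ j ∉ nbrR E A₁
     else if A₁ = ∅ then j ∈ A₂ ∨ i ∉ nbrL E A₂
     else i ∈ A₁ ∨ j ∈ A₂)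

instance (E : Fin m → Fin n → Prop) [∀ i j, Decidable (E i j)]
    (A₁ : Finset (Fin m)) (A₂ : Finset (Fin n)) (i : Fin m) (j : Fin n) :
    Decidable (assoc E A₁ A₂ i j) := by
  unfold assoc; infer_instance

/-- The number of connected components of the bipartite graph with edge relation `E`
(isolated vertices count as connected components). -/
noncomputable def numComponents (E : Fin m → Fin n → Prop) : ℕ :=
  Nat.card (toGraph E).ConnectedComponent

/-- `A ∈ I_G^(1)`: a first independent set, i.e. an element of `I_G^(*)` whose associated
subgraph `G{A}` has exactly two connected components. -/
def FirstIndep (E : Fin m → Fin n → Prop) [∀ i j, Decidable (E i j)]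
    (A₁ : Finset (Fin m)) (A₂ : Finset (Fin n)) : Prop :=
  InIStar E A₁ A₂ ∧ numComponents (assoc E A₁ A₂) = 2

/-- The supporting hyperplane `H_{A₁}` of a one-sided set `A₁ ⊆ U₁`:
`Σ_{v ∈ A₁} x_v = Σ_{v ∈ N(A₁)} x_v`. -/
def hyp1 (E : Fin m → Fin n → Prop) [∀ i j, Decidable (E i j)]
    (A₁ : Finset (Fin m)) : Set ((Fin m ⊕ Fin n) → ℝ) :=
  {x | ∑ i ∈ A₁, x (inl i) = ∑ j ∈ nbrR E A₁, x (inr j)}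

/-- The supporting hyperplane `H_{A₂}` of a one-sided set `A₂ ⊆ U₂`. -/
def hyp2 (E : Fin m → Fin n → Prop) [∀ i j, Decidable (E i j)]
    (A₂ : Finset (Fin n)) : Set ((Fin m ⊕ Fin n) → ℝ) :=
  {x | ∑ j ∈ A₂, x (inr j) = ∑ i ∈ nbrL E A₂, x (inl i)}

/-- The supporting hyperplane `H_A` of `A = A₁ ⊔ A₂`, taken with respect to a nonempty
one-sided part of `A`. -/
def hypA (E : Fin m → Fin n → Prop) [∀ i j, Decidable (E i j)]
    (A₁ : Finset (Fin m)) (A₂ : Finset (Fin n)) : Set ((Fin m ⊕ Fin n) → ℝ) :=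
  if A₁ = ∅ then hyp2 E A₂ else hyp1 E A₁

/-- Connectivity of the induced subgraph `G[S ⊔ T]` for `S ⊆ U₁`, `T ⊆ U₂`. -/
def InducedConnected (E : Fin m → Fin n → Prop)
    (S : Finset (Fin m)) (T : Finset (Fin n)) : Prop :=
  ((toGraph E).induce
    ((inl '' (S : Set (Fin m)) ∪ inr '' (T : Set (Fin n))) : Set (Fin m ⊕ Fin n))).Connected

/-- The degree (valency) sequence of the bipartite graph with edge relation `E`,
as a vector in `ℝ^{m+n}`. -/
def valVec (E : Fin m → Fin n → Prop) [∀ i j, Decidable (E i j)] :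
    (Fin m ⊕ Fin n) → ℝ :=
  Sum.elim (fun i => ((univ.filter fun j => E i j).card : ℝ))
    (fun j => ((univ.filter fun i => E i j).card : ℝ))

/-!
For `A ∈ I_G^(*)` write `H_A = {x | Σ_P x = Σ_Q x}` with `P ⊔ Q = side E A₁ A₂`. An edge
generator `e^i + f^j` lies on `H_A` iff the edge does not cross `P ⊔ Q`, and these are exactly
the edges of `G{A}`. Equal facets therefore force `G{A} = G{B}`, so `side B` and `side A` are both
unions of components of this two-component graph: `side B` is `side A` or its complement.
When `A` and `B` have the same type, the complement is excluded by connectivity of `G`, and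
`side A = side B` gives `A = B` because `A₂` is determined by a nonempty `A₁`. A one-sided
`B ⊆ U₂` never matches an `A` meeting `U₁`: `N(B)` would be a nonempty proper subset of `U₁`,
and `N(B)ᶜ ⊔ B` a two-sided independent set containing `B`.
-/

def IsAdjClosed {V : Type*} (G : SimpleGraph V) (S : Set V) : Prop :=
  ∀ ⦃u v⦄, G.Adj u v → (u ∈ S ↔ v ∈ S)

namespace IsAdjClosed

variable {V : Type*} {G : SimpleGraph V} {S T : Set V}

theorem mem_iff_of_reachable (hS : IsAdjClosed G S) {u v : V} (h : G.Reachable u v) :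
    u ∈ S ↔ v ∈ S := by
  obtain ⟨w⟩ := h
  induction w with
  | nil => rfl
  | cons hadj _ ih => exact (hS hadj).trans ih

theorem eq_empty_or_eq_univ (hS : IsAdjClosed G S) (hG : G.Preconnected) :
    S = ∅ ∨ S = Set.univ := by
  refine S.eq_empty_or_nonempty.imp_right fun ⟨s, hs⟩ => ?_
  exact Set.eq_univ_of_forall fun v => (hS.mem_iff_of_reachable (hG s v)).mp hs

theorem eq_setOf_connectedComponentMk_eq (hS : IsAdjClosed G S)
    (h2 : Nat.card G.ConnectedComponent = 2) {s s' : V} (hs : s ∈ S) (hs' : s' ∉ S) :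
    S = {v | G.connectedComponentMk v = G.connectedComponentMk s} := by
  have hss' : G.connectedComponentMk s' ≠ G.connectedComponentMk s := fun h =>
    hs' ((hS.mem_iff_of_reachable (SimpleGraph.ConnectedComponent.exact h)).mpr hs)
  ext v
  refine ⟨fun hv => ?_, fun hv => (hS.mem_iff_of_reachable
    (SimpleGraph.ConnectedComponent.exact hv)).mpr hs⟩
  by_contra hvs
  have hvs' := ((Nat.card_eq_two_iff' _).mp h2).unique hvs hss'
  exact hs' ((hS.mem_iff_of_reachable (SimpleGraph.ConnectedComponent.exact hvs')).mp hv)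

theorem compl (hS : IsAdjClosed G S) : IsAdjClosed G Sᶜ := fun _ _ h => not_congr (hS h)

theorem eq_or_eq_compl (hS : IsAdjClosed G S) (hT : IsAdjClosed G T)
    (h2 : Nat.card G.ConnectedComponent = 2) {s s' t t' : V} (hs : s ∈ S) (hs' : s' ∉ S)
    (ht : t ∈ T) (ht' : t' ∉ T) : T = S ∨ T = Sᶜ := by
  rw [hT.eq_setOf_connectedComponentMk_eq h2 ht ht']
  by_cases htS : t ∈ S
  · exact Or.inl (hS.eq_setOf_connectedComponentMk_eq h2 htS hs').symm
  · exact Or.inr (hS.compl.eq_setOf_connectedComponentMk_eq h2 htS (not_not.mpr hs)).symm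

end IsAdjClosed

def sideSet {α β : Type*} (P : Finset α) (Q : Finset β) : Set (α ⊕ β) :=
  Sum.elim (· ∈ P) (· ∈ Q)

section sideSet

variable {α β : Type*} {P P' : Finset α} {Q Q' : Finset β}

@[simp] theorem inl_mem_sideSet {a : α} : inl a ∈ sideSet P Q ↔ a ∈ P := Iff.rfl

@[simp] theorem inr_mem_sideSet {b : β} : inr b ∈ sideSet P Q ↔ b ∈ Q := Iff.rfl

theorem sideSet_compl [Fintype α] [DecidableEq α] [Fintype β] [DecidableEq β] :
    (sideSet P Q)ᶜ = sideSet Pᶜ Qᶜ := by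
  ext (a | b) <;> simp

theorem sideSet_inj : sideSet P Q = sideSet P' Q' ↔ P = P' ∧ Q = Q' := by
  refine ⟨fun h => ⟨?_, ?_⟩, fun ⟨hP, hQ⟩ => hP ▸ hQ ▸ rfl⟩
  · ext a; exact Set.ext_iff.mp h (inl a)
  · ext b; exact Set.ext_iff.mp h (inr b)

end sideSet

theorem isAdjClosed_toGraph {R : Fin m → Fin n → Prop} {S : Set (Fin m ⊕ Fin n)}
    (h : ∀ i j, R i j → (inl i ∈ S ↔ inr j ∈ S)) : IsAdjClosed (toGraph R) S := by
  rintro u v (⟨i, j, rfl, rfl, hR⟩ | ⟨i, j, rfl, rfl, hR⟩)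
  · exact h i j hR
  · exact (h i j hR).symm

theorem sideSet_eq_empty_or_eq_univ {E : Fin m → Fin n → Prop} (hconn : (toGraph E).Connected)
    {P : Finset (Fin m)} {Q : Finset (Fin n)} (h : ∀ i j, E i j → (i ∈ P ↔ j ∈ Q)) :
    sideSet P Q = ∅ ∨ sideSet P Q = Set.univ :=
  (isAdjClosed_toGraph h).eq_empty_or_eq_univ hconn.preconnected

section Neighbours

variable {E : Fin m → Fin n → Prop} [∀ i j, Decidable (E i j)]

theorem mem_nbrR {P : Finset (Fin m)} {i : Fin m} {j : Fin n} (hi : i ∈ P) (hE : E i j) :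
    j ∈ nbrR E P := by
  simpa [nbrR] using ⟨i, hi, hE⟩

theorem mem_nbrL {Q : Finset (Fin n)} {i : Fin m} {j : Fin n} (hj : j ∈ Q) (hE : E i j) :
    i ∈ nbrL E Q := by
  simpa [nbrL] using ⟨j, hj, hE⟩

theorem nbrR_compl_ne (hconn : (toGraph E).Connected) {P : Finset (Fin m)} {p p' : Fin m}
    (hp : p ∈ P) (hp' : p' ∉ P) : nbrR E Pᶜ ≠ (nbrR E P)ᶜ := by
  intro h
  have hcut : ∀ i j, E i j → (i ∈ P ↔ j ∈ nbrR E P) := fun i j hE =>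
    ⟨fun hi => mem_nbrR hi hE, fun hj => by_contra fun hi =>
      mem_compl.mp (h ▸ mem_nbrR (mem_compl.mpr hi) hE) hj⟩
  rcases sideSet_eq_empty_or_eq_univ hconn hcut with h0 | h1
  · exact Set.eq_empty_iff_forall_notMem.mp h0 (inl p) hp
  · exact hp' (Set.eq_univ_iff_forall.mp h1 (inl p'))

theorem nbrL_compl_ne (hconn : (toGraph E).Connected) {Q : Finset (Fin n)} {q q' : Fin n}
    (hq : q ∈ Q) (hq' : q' ∉ Q) : nbrL E Qᶜ ≠ (nbrL E Q)ᶜ := by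
  intro h
  have hcut : ∀ i j, E i j → (i ∈ nbrL E Q ↔ j ∈ Q) := fun i j hE =>
    ⟨fun hi => by_contra fun hj => mem_compl.mp (h ▸ mem_nbrL (mem_compl.mpr hj) hE) hi,
      fun hj => mem_nbrL hj hE⟩
  rcases sideSet_eq_empty_or_eq_univ hconn hcut with h0 | h1
  · exact Set.eq_empty_iff_forall_notMem.mp h0 (inr q) hq
  · exact hq' (Set.eq_univ_iff_forall.mp h1 (inr q'))

end Neighbours

section Cone

variable {E : Fin m → Fin n → Prop}

theorem gen_mem_dualEdgeCone {i : Fin m} {j : Fin n} (h : E i j) : gen i j ∈ dualEdgeCone E := by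
  refine ⟨fun i' j' => if i' = i ∧ j' = j then 1 else 0, fun _ _ => by positivity, ?_, ?_⟩
  · intro i' j' hc
    obtain ⟨rfl, rfl⟩ : i' = i ∧ j' = j := by
      by_contra hne; exact hc (if_neg hne)
    exact h
  · simp [ite_and, Finset.sum_ite_eq']

theorem gen_mem_hyp1_iff [∀ i j, Decidable (E i j)] {P : Finset (Fin m)} {i : Fin m}
    {j : Fin n} : gen i j ∈ hyp1 E P ↔ (i ∈ P ↔ j ∈ nbrR E P) := by
  by_cases hi : i ∈ P <;> by_cases hj : j ∈ nbrR E P <;> simp [hyp1, gen, Pi.single_apply, hi, hj]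

theorem gen_mem_hyp2_iff [∀ i j, Decidable (E i j)] {Q : Finset (Fin n)} {i : Fin m}
    {j : Fin n} : gen i j ∈ hyp2 E Q ↔ (i ∈ nbrL E Q ↔ j ∈ Q) := by
  by_cases hi : i ∈ nbrL E Q <;> by_cases hj : j ∈ Q <;> simp [hyp2, gen, Pi.single_apply, hi, hj]

end Cone

section IStar

variable {E : Fin m → Fin n → Prop} {A₁ : Finset (Fin m)} {A₂ : Finset (Fin n)}

/-- The vertex set `P ⊔ Q` with `H_A = {x | Σ_P x = Σ_Q x}`: `A₁ ⊔ N(A₁)`, or `N(A₂) ⊔ A₂` when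
`A₁ = ∅`. -/
def side (E : Fin m → Fin n → Prop) [∀ i j, Decidable (E i j)]
    (A₁ : Finset (Fin m)) (A₂ : Finset (Fin n)) : Set (Fin m ⊕ Fin n) :=
  if A₁ = ∅ then sideSet (nbrL E A₂) A₂ else sideSet A₁ (nbrR E A₁)

theorem gen_mem_hypA_iff [∀ i j, Decidable (E i j)] {i : Fin m} {j : Fin n} :
    gen i j ∈ hypA E A₁ A₂ ↔ (inl i ∈ side E A₁ A₂ ↔ inr j ∈ side E A₁ A₂) := by
  unfold hypA side
  split_ifs <;> simp [gen_mem_hyp1_iff, gen_mem_hyp2_iff]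

theorem TwoSidedMaxIndep.snd_eq [∀ i j, Decidable (E i j)] (h : TwoSidedMaxIndep E A₁ A₂) :
    A₂ = (nbrR E A₁)ᶜ := by
  have hindep : IsIndepPair E A₁ (nbrR E A₁)ᶜ := fun i hi j hj hE =>
    mem_compl.mp hj (mem_nbrR hi hE)
  refine (h.2 _ _ hindep subset_rfl fun j hj => mem_compl.mpr fun hjN => ?_).2.symm
  obtain ⟨i, hi, hE⟩ := by simpa [nbrR] using hjN
  exact h.1.2.2.2.2 i hi j hj hE

namespace InIStar

theorem snd_unique [∀ i j, Decidable (E i j)] {B₂ : Finset (Fin n)} (hA : InIStar E A₁ A₂)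
    (hB : InIStar E A₁ B₂) (h₁ : A₁ ≠ ∅) : A₂ = B₂ := by
  rcases hA with hA | ⟨rfl, -, -, hnA⟩ | ⟨h₁', -⟩
  · rcases hB with hB | ⟨rfl, -, -, hnB⟩ | ⟨h₁', -⟩
    · rw [hA.snd_eq, hB.snd_eq]
    · exact absurd ⟨A₁, A₂, hA.1, subset_rfl⟩ hnB
    · exact absurd h₁' h₁
  · rcases hB with hB | ⟨rfl, -, -, -⟩ | ⟨h₁', -⟩
    · exact absurd ⟨A₁, B₂, hB.1, subset_rfl⟩ hnA
    · rfl
    · exact absurd h₁' h₁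
  · exact absurd h₁' h₁

theorem fst_ne_univ (h : InIStar E A₁ A₂) (h₁ : A₁ ≠ ∅) : A₁ ≠ univ := by
  rcases h with hmax | ⟨-, -, ⟨v, rfl⟩, -⟩ | ⟨rfl, -⟩
  · exact hmax.1.2.1
  · simp
  · exact absurd rfl h₁

theorem snd_nonempty (h : InIStar E ∅ A₂) : A₂.Nonempty := by
  rcases h with hmax | ⟨-, hne, -⟩ | ⟨-, hne, -⟩
  · exact absurd hmax.1.1 not_nonempty_empty
  · exact absurd hne not_nonempty_empty
  · exact hne

theorem snd_ne_univ (h : InIStar E ∅ A₂) : A₂ ≠ univ := by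
  rcases h with hmax | ⟨-, hne, -⟩ | ⟨-, -, ⟨w, rfl⟩, -⟩
  · exact absurd hmax.1.1 not_nonempty_empty
  · exact absurd hne not_nonempty_empty
  · simp

theorem assoc_iff [∀ i j, Decidable (E i j)] (h : InIStar E A₁ A₂) {i : Fin m} {j : Fin n} :
    assoc E A₁ A₂ i j ↔ E i j ∧ (inl i ∈ side E A₁ A₂ ↔ inr j ∈ side E A₁ A₂) := by
  have hR : i ∈ A₁ → E i j → j ∈ nbrR E A₁ := mem_nbrR
  have hL : j ∈ A₂ → E i j → i ∈ nbrL E A₂ := mem_nbrL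
  rcases h with hmax | ⟨rfl, hne, -⟩ | ⟨rfl, hne, -⟩
  · have h₁ := hmax.1.1.ne_empty
    simp only [assoc, side, if_neg h₁, hmax.snd_eq, ite_self, mem_compl, inl_mem_sideSet,
      inr_mem_sideSet]
    tauto
  · simp only [assoc, side, if_neg hne.ne_empty, if_pos, inl_mem_sideSet, inr_mem_sideSet]
    tauto
  · simp only [assoc, side, if_neg hne.ne_empty, if_pos, inl_mem_sideSet, inr_mem_sideSet]
    tauto

theorem exists_mem_side [∀ i j, Decidable (E i j)] (h : InIStar E A₁ A₂) :
    ∃ u v, u ∈ side E A₁ A₂ ∧ v ∉ side E A₁ A₂ := by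
  by_cases h₁ : A₁ = ∅
  · subst h₁
    obtain ⟨q, hq⟩ := h.snd_nonempty
    obtain ⟨q', hq'⟩ := by simpa [eq_univ_iff_forall] using h.snd_ne_univ
    exact ⟨inr q, inr q', by simpa [side] using hq, by simpa [side] using hq'⟩
  · obtain ⟨p, hp⟩ := nonempty_iff_ne_empty.mpr h₁
    obtain ⟨p', hp'⟩ := by simpa [eq_univ_iff_forall] using h.fst_ne_univ h₁
    exact ⟨inl p, inl p', by simpa [side, h₁] using hp, by simpa [side, h₁] using hp'⟩

theorem nbrL_eq_empty_or_eq_univ [∀ i j, Decidable (E i j)] (h : InIStar E ∅ A₂) :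
    nbrL E A₂ = ∅ ∨ nbrL E A₂ = univ := by
  rcases h with hmax | ⟨-, hne, -⟩ | ⟨-, hne, ⟨w, rfl⟩, hnot⟩
  · exact absurd hmax.1.1 not_nonempty_empty
  · exact absurd hne not_nonempty_empty
  by_contra! hN
  have hindep : IsIndepPair E (nbrL E {w}ᶜ)ᶜ {w}ᶜ := fun i hi j hj hE =>
    mem_compl.mp hi (mem_nbrL hj hE)
  refine hnot ⟨_, _, ⟨?_, ?_, hne, by simp, hindep⟩, subset_rfl⟩
  · simpa [nonempty_iff_ne_empty] using hN.2
  · simpa [compl_ne_univ_iff_nonempty, nonempty_iff_ne_empty] using hN.1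

end InIStar

end IStar

section Facet

variable {E : Fin m → Fin n → Prop} [∀ i j, Decidable (E i j)]
  {A₁ B₁ : Finset (Fin m)} {A₂ B₂ : Finset (Fin n)}

theorem FirstIndep.side_eq_or_eq_compl (hA : FirstIndep E A₁ A₂) (hB : InIStar E B₁ B₂)
    (heq : hypA E A₁ A₂ ∩ dualEdgeCone E = hypA E B₁ B₂ ∩ dualEdgeCone E) :
    side E B₁ B₂ = side E A₁ A₂ ∨ side E B₁ B₂ = (side E A₁ A₂)ᶜ := by
  have hcut : ∀ i j, E i j → ((inl i ∈ side E A₁ A₂ ↔ inr j ∈ side E A₁ A₂) ↔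
      (inl i ∈ side E B₁ B₂ ↔ inr j ∈ side E B₁ B₂)) := fun i j hE => by
    simpa [gen_mem_dualEdgeCone hE, gen_mem_hypA_iff] using Set.ext_iff.mp heq (gen i j)
  have hSA : IsAdjClosed (toGraph (assoc E A₁ A₂)) (side E A₁ A₂) :=
    isAdjClosed_toGraph fun _ _ h => (hA.1.assoc_iff.mp h).2
  have hSB : IsAdjClosed (toGraph (assoc E A₁ A₂)) (side E B₁ B₂) :=
    isAdjClosed_toGraph fun i j h =>
      (hcut i j (hA.1.assoc_iff.mp h).1).mp (hA.1.assoc_iff.mp h).2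
  obtain ⟨s, s', hs, hs'⟩ := hA.1.exists_mem_side
  obtain ⟨t, t', ht, ht'⟩ := hB.exists_mem_side
  exact hSA.eq_or_eq_compl hSB hA.2 hs hs' ht ht'

namespace InIStar

theorem eq_of_side_eq_or_eq_compl (hconn : (toGraph E).Connected) (hA : InIStar E A₁ A₂)
    (hB : InIStar E B₁ B₂) (hA₁ : A₁ ≠ ∅) (hB₁ : B₁ ≠ ∅)
    (h : side E B₁ B₂ = side E A₁ A₂ ∨ side E B₁ B₂ = (side E A₁ A₂)ᶜ) :
    A₁ = B₁ ∧ A₂ = B₂ := by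
  obtain ⟨p, hp⟩ := nonempty_iff_ne_empty.mpr hA₁
  obtain ⟨p', hp'⟩ := by simpa [eq_univ_iff_forall] using hA.fst_ne_univ hA₁
  simp only [side, if_neg hA₁, if_neg hB₁, sideSet_compl, sideSet_inj] at h
  rcases h with ⟨rfl, -⟩ | ⟨rfl, hN⟩
  · exact ⟨rfl, hA.snd_unique hB hA₁⟩
  · exact absurd hN (nbrR_compl_ne hconn hp hp')

theorem snd_eq_of_side_eq_or_eq_compl (hconn : (toGraph E).Connected) (hA : InIStar E ∅ A₂)
    (h : side E ∅ B₂ = side E ∅ A₂ ∨ side E ∅ B₂ = (side E ∅ A₂)ᶜ) : A₂ = B₂ := by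
  obtain ⟨q, hq⟩ := hA.snd_nonempty
  obtain ⟨q', hq'⟩ := by simpa [eq_univ_iff_forall] using hA.snd_ne_univ
  simp only [side, if_pos, sideSet_compl, sideSet_inj] at h
  rcases h with ⟨-, rfl⟩ | ⟨hN, rfl⟩
  · rfl
  · exact absurd hN (nbrL_compl_ne hconn hq hq')

theorem not_side_eq_or_eq_compl (hA : InIStar E A₁ A₂) (hB : InIStar E ∅ B₂) (hA₁ : A₁ ≠ ∅) :
    ¬ (side E ∅ B₂ = side E A₁ A₂ ∨ side E ∅ B₂ = (side E A₁ A₂)ᶜ) := by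
  have hA₁' := hA.fst_ne_univ hA₁
  simp only [side, if_pos, if_neg hA₁, sideSet_compl, sideSet_inj]
  rintro (⟨hN, -⟩ | ⟨hN, -⟩) <;> rcases hB.nbrL_eq_empty_or_eq_univ with h | h <;> rw [hN] at h
  · exact hA₁ h
  · exact hA₁' h
  · exact hA₁' ((compl_eq_empty_iff _).mp h)
  · exact hA₁ ((compl_eq_univ_iff _).mp h)

end InIStar

end Facet

/-- The map sending a first independent set `A ∈ I_G^(1)` of a connected
bipartite graph `G ⊆ K_{m,n}` to the facet `H_A ∩ σ_G^∨` of `σ_G^∨` is injective: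
if `H_A ∩ σ_G^∨ = H_B ∩ σ_G^∨` for `A, B ∈ I_G^(1)`, then `A = B`. -/
theorem firstIndep_facet_injective (m n : ℕ) (E : Fin m → Fin n → Prop)
    [∀ i j, Decidable (E i j)] (hconn : (toGraph E).Connected)
    (A₁ B₁ : Finset (Fin m)) (A₂ B₂ : Finset (Fin n))
    (hA : FirstIndep E A₁ A₂) (hB : FirstIndep E B₁ B₂)
    (heq : hypA E A₁ A₂ ∩ dualEdgeCone E = hypA E B₁ B₂ ∩ dualEdgeCone E) :
    A₁ = B₁ ∧ A₂ = B₂ := by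
  have hAB := hA.side_eq_or_eq_compl hB.1 heq
  have hBA := hB.side_eq_or_eq_compl hA.1 heq.symm
  by_cases hA₁ : A₁ = ∅ <;> by_cases hB₁ : B₁ = ∅
  · subst hA₁ hB₁
    exact ⟨rfl, hA.1.snd_eq_of_side_eq_or_eq_compl hconn hAB⟩
  · subst hA₁
    exact absurd hBA (hB.1.not_side_eq_or_eq_compl hA.1 hB₁)
  · subst hB₁
    exact absurd hAB (hA.1.not_side_eq_or_eq_compl hB.1 hA₁)
  · exact hA.1.eq_of_side_eq_or_eq_compl hconn hB.1 hA₁ hB₁ hAB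

end ToricBipartite
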